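/- arXiv:2412.05497 — 3 statements merged into one kernel-verified Lean document; each statement's English description precedes it below -/
import Mathlib

section
/- For every positive integer k, the sum of the first 2^k - 1 entries of the silver stepsize schedule equals ρ^k - 1, where ρ = 1 + √2. -/
/-- The silver ratio ρ = 1 + √2. -/
noncomputable def rho : ℝ := 1 + Real.sqrt 2

/-- The silver stepsize schedule: α_t = ρ^{ν(t+1)−1} + 1, where ν is the 2-adic valuation. -/
noncomputable def silver (t : ℕ) : ℝ := rho ^ ((padicValNat 2 (t + 1) : ℤ) - 1) + 1

lemma rho_pos : (0 : ℝ) < rho := by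
  have := Real.sqrt_nonneg 2
  unfold rho; linarith

lemma rho_ne_zero : rho ≠ 0 := ne_of_gt rho_pos

lemma rho_inv : rho⁻¹ = rho - 2 := by
  have h2 : Real.sqrt 2 * Real.sqrt 2 = 2 := Real.mul_self_sqrt (by norm_num)
  have h : rho * (rho - 2) = 1 := by unfold rho; nlinarith
  exact inv_eq_of_mul_eq_one_right h

lemma sum_split (f : ℕ → ℝ) : ∀ n, ∑ t ∈ Finset.range (2 * n + 1), f t =
    ∑ j ∈ Finset.range (n + 1), f (2 * j) + ∑ j ∈ Finset.range n, f (2 * j + 1)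
  | 0 => by simp
  | n + 1 => by
      have h2 : 2 * (n + 1) + 1 = (2 * n + 1) + 1 + 1 := by ring
      have h3 : 2 * n + 1 + 1 = 2 * (n + 1) := by ring
      rw [h2, Finset.sum_range_succ, Finset.sum_range_succ, sum_split f n]
      simp only [Finset.sum_range_succ]
      rw [h3]
      ring

lemma silver_even (j : ℕ) : silver (2 * j) = rho⁻¹ + 1 := by
  unfold silver
  have h : padicValNat 2 (2 * j + 1) = 0 :=
    padicValNat.eq_zero_of_not_dvd (by omega)
  rw [h]
  norm_num

lemma silver_odd (j : ℕ) : silver (2 * j + 1) = rho * (silver j - 1) + 1 := by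
  unfold silver
  have h1 : 2 * j + 1 + 1 = 2 * (j + 1) := by ring
  rw [h1]
  have h2 : padicValNat 2 (2 * (j + 1)) = 1 + padicValNat 2 (j + 1) := by
    rw [padicValNat.mul (by norm_num) (Nat.succ_ne_zero j)]
    simp [padicValNat.self]
  have h3 : (1 : ℤ) + (padicValNat 2 (j + 1) : ℤ) - 1 =
      1 + ((padicValNat 2 (j + 1) : ℤ) - 1) := by ring
  rw [h2, Nat.cast_add, Nat.cast_one, h3, zpow_add₀ rho_ne_zero, zpow_one]
  ring

/-- for every positive integer k, the sum of the first 2^k − 1 silver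
stepsizes equals ρ^k − 1. -/
theorem silver_sum (k : ℕ) (hk : 1 ≤ k) :
    ∑ t ∈ Finset.range (2 ^ k - 1), silver t = rho ^ k - 1 := by
  induction k, hk using Nat.le_induction with
  | base =>
      simp only [pow_one]
      norm_num
      have := silver_even 0
      simp at this
      rw [this, rho_inv]
      ring
  | succ k hk ih =>
      have hpow : (1 : ℕ) ≤ 2 ^ k := Nat.one_le_two_pow
      have hn : 2 ^ (k + 1) - 1 = 2 * (2 ^ k - 1) + 1 := by
        rw [pow_succ]; omega
      rw [hn, sum_split]
      simp only [silver_even, silver_odd]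
      rw [Finset.sum_const, Finset.sum_add_distrib, ← Finset.mul_sum,
        Finset.sum_sub_distrib, ih]
      simp only [Finset.sum_const, Finset.card_range, nsmul_eq_mul, mul_one]
      have h4 : 2 ^ k - 1 + 1 = 2 ^ k := by omega
      rw [h4]
      have hcast : ((2 ^ k - 1 : ℕ) : ℝ) = 2 ^ k - 1 := by
        rw [Nat.cast_sub hpow]; push_cast; ring
      rw [hcast, rho_inv]
      push_cast
      ring
end

section
/- For every positive integer k, the first entry of c^{(k)} satisfies c^{(k)}_1 ≥ √2. -/
/-- The auxiliary sequence c^{(k)} (zero-based indexing of the 2^k − 1 entries):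
c^{(1)} = [2(ρ−1)],
c^{(k+1)} = [π^{(k)}, (1+1/ρ^k)(ρ^{k−1}+1), ρ c^{(k)} − (ρ−1−1/ρ^k) π^{(k)}]. -/
noncomputable def csil : ℕ → ℕ → ℝ
  | 0, _ => 0
  | 1, _ => 2 * (rho - 1)
  | (k+2), j =>
      let n := 2 ^ (k + 1) - 1
      if j < n then silver j
      else if j = n then (1 + rho ^ (-(k + 1 : ℤ))) * (rho ^ k + 1)
      else rho * csil (k+1) (j - n - 1) - (rho - 1 - rho ^ (-(k + 1 : ℤ))) * silver (j - n - 1)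

/-- the first entry of c^{(k)} satisfies c^{(k)}_1 ≥ √2. -/
theorem csil_first_ge_sqrt_two (k : ℕ) (hk : 1 ≤ k) :
    Real.sqrt 2 ≤ csil k 0 := by
  have h2 : (0:ℝ) ≤ Real.sqrt 2 := Real.sqrt_nonneg 2
  match k, hk with
  | 1, _ =>
    show Real.sqrt 2 ≤ 2 * (rho - 1)
    have : rho - 1 = Real.sqrt 2 := by simp [rho]
    rw [this]; linarith
  | (k+2), _ =>
    have hn : 0 < 2 ^ (k + 1) - 1 := by
      have : (2:ℕ) ≤ 2 ^ (k+1) := by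
        calc (2:ℕ) = 2^1 := rfl
        _ ≤ 2^(k+1) := Nat.pow_le_pow_right (by norm_num) (by omega)
      omega
    show Real.sqrt 2 ≤ csil (k+2) 0
    rw [csil]
    simp only [hn, if_pos]
    have : silver 0 = Real.sqrt 2 := by
      have hρ : rho = 1 + Real.sqrt 2 := rfl
      have hρpos : (0:ℝ) < rho := by rw [hρ]; linarith
      have hs : Real.sqrt 2 ^ 2 = 2 := Real.sq_sqrt (by norm_num)
      have hmul : (Real.sqrt 2 - 1) * rho = 1 := by rw [hρ]; nlinarith
      have hinv : rho ^ (-1 : ℤ) = Real.sqrt 2 - 1 := by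
        rw [zpow_neg_one]; exact inv_eq_of_mul_eq_one_left hmul
      simp [silver, hinv]
    rw [this]
end

section
/- Silver one-step base-case identity: for a convex 1-smooth f and convex h, with x_1 = x_0 − (ρ−1)(g_0 + s_1) where g_i := ∇f(x_i), s_1 ∈ ∂h(x_1), and any minimizer x_* of F = f + h with s_* = −g_* ∈ ∂h(x_*), the combination ρQ^f_{01} + Q^f_{10} + (ρ−1)Q^f_{*0} + ρQ^f_{*1} + (2ρ−1)Q^h_{*1} equals (2ρ−1)(F(x_*) − F(x_1)) + (ρ/(2√2))‖x_0−x_*‖² − (1/2)‖x_0 − x_* − (ρ−1)g_0 − ρg_1 − 2(ρ−1)s_1 − s_*‖² − (1/(4√2))‖x_0−x_*‖² − (1/(4√2))‖x_0 − x_* − 2(ρ−1)(s_1 − s_*)‖², where ρ = 1+√2, Q^f_{ij} := f_i − f_j − ⟨g_j, x_i − x_j⟩ − (1/2)‖g_i − g_j‖², and Q^h_{ij} := h_i − h_j − ⟨s_j, x_i − x_j⟩. -/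
open RealInnerProductSpace

/-- Co-coercivity Q^f_{ij} = f_i − f_j − ⟨g_j, x_i − x_j⟩ − (1/2)‖g_i − g_j‖². -/
noncomputable def Qf {E : Type*} [NormedAddCommGroup E] [InnerProductSpace ℝ E]
    (fi fj : ℝ) (gi gj xi xj : E) : ℝ :=
  fi - fj - ⟪gj, xi - xj⟫ - (1 / 2) * ‖gi - gj‖ ^ 2

/-- Co-coercivity Q^h_{ij} = h_i − h_j − ⟨s_j, x_i − x_j⟩. -/
noncomputable def Qh {E : Type*} [NormedAddCommGroup E] [InnerProductSpace ℝ E]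
    (hi hj : ℝ) (sj xi xj : E) : ℝ :=
  hi - hj - ⟪sj, xi - xj⟫

/-- silver one-step base-case identity. With x_1 = x_0 − (ρ−1)(g_0 + s_1)
(the proximal GD step, with g_i = ∇f(x_i), s_1 ∈ ∂h(x_1)) and s_* = −g_* (optimality of x_*),
ρ Q^f_{01} + Q^f_{10} + (ρ−1) Q^f_{*0} + ρ Q^f_{*1} + (2ρ−1) Q^h_{*1}
  = (2ρ−1)(F_* − F_1) + (ρ/(2√2))‖x_0 − x_*‖²
    − (1/2)‖x_0 − x_* − (ρ−1)g_0 − ρ g_1 − 2(ρ−1)s_1 − s_*‖²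
    − (1/(4√2))‖x_0 − x_*‖² − (1/(4√2))‖x_0 − x_* − 2(ρ−1)(s_1 − s_*)‖². -/
theorem silver_base_case {E : Type*} [NormedAddCommGroup E] [InnerProductSpace ℝ E]
    (f0 f1 fstar h1 hstar : ℝ) (g0 g1 gstar s1 sstar x0 x1 xstar : E)
    (hx1 : x1 = x0 - (rho - 1) • (g0 + s1))
    (hopt : sstar = -gstar) :
    rho * Qf f0 f1 g0 g1 x0 x1 + Qf f1 f0 g1 g0 x1 x0
      + (rho - 1) * Qf fstar f0 gstar g0 xstar x0 + rho * Qf fstar f1 gstar g1 xstar x1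
      + (2 * rho - 1) * Qh hstar h1 s1 xstar x1
    = (2 * rho - 1) * ((fstar + hstar) - (f1 + h1))
      + (rho / (2 * Real.sqrt 2)) * ‖x0 - xstar‖ ^ 2
      - (1 / 2) * ‖x0 - xstar - (rho - 1) • g0 - rho • g1 - (2 * (rho - 1)) • s1 - sstar‖ ^ 2
      - (1 / (4 * Real.sqrt 2)) * ‖x0 - xstar‖ ^ 2
      - (1 / (4 * Real.sqrt 2)) * ‖x0 - xstar - (2 * (rho - 1)) • (s1 - sstar)‖ ^ 2 := by
  subst hx1 hopt
  have hs : Real.sqrt 2 ^ 2 = 2 := Real.sq_sqrt (by norm_num)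
  have hs0 : Real.sqrt 2 ≠ 0 := by positivity
  simp only [Qf, Qh, rho, ← real_inner_self_eq_norm_sq]
  simp only [inner_sub_left, inner_sub_right, inner_add_left, inner_add_right,
    inner_smul_left, inner_smul_right, inner_neg_left, inner_neg_right, real_inner_comm x0 xstar,
    real_inner_comm g0 x0, real_inner_comm g1 x0, real_inner_comm gstar x0, real_inner_comm s1 x0,
    real_inner_comm g0 xstar, real_inner_comm g1 xstar, real_inner_comm gstar xstar, real_inner_comm s1 xstar,
    real_inner_comm g1 g0, real_inner_comm gstar g0, real_inner_comm s1 g0,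
    real_inner_comm gstar g1, real_inner_comm s1 g1, real_inner_comm s1 gstar,
    RCLike.ofReal_real_eq_id, id_eq, conj_trivial]
  have h3 : Real.sqrt 2 ^ 3 = 2 * Real.sqrt 2 := by rw [pow_succ, hs]
  have h4 : Real.sqrt 2 ^ 4 = 4 := by rw [show (4:ℕ)=2*2 from rfl, pow_mul, hs]; norm_num
  have h5 : Real.sqrt 2 ^ 5 = 4 * Real.sqrt 2 := by rw [pow_succ, h4]
  field_simp
  ring_nf
  simp only [h3, h4, h5, hs]
  ring
end
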